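/- Fix real numbers α, β, integers 0 ≤ r ≤ K < N, and λ ∈ ℝ. Suppose the real numbers c_0, …, c_{K−r} satisfy, for every 0 ≤ j ≤ K−r, (2(r+j)(α−N) + βN)·c_j + (2√((r+j)(r+j+1)) − β)·m(r,j)·c_{j+1} + (2√((r+j)(r+j−1)) − β)·c_{j−1} = λ·c_j, with the conventions c_{−1} = 0 and c_{K−r+1} = 0. Then for every W ∈ W_r, the vertex function V = Σ_{j=0}^{K−r} c_j·A₊^{j}W satisfies Q_K(HBDO(Q_K V)) = λV. -/

import Mathlib

/-!
A vector `W ∈ W_r` is orthogonal to the range of `A₊`, the adjoint of `A₋`, so `A₋ W = 0`.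
The commutator `A₋A₊ - A₊A₋` acts on `Σ_k` as multiplication by `N - 2k`, which gives
`A₋ A₊^[j+1] W = m(r,j) • A₊^[j] W`. Since `T` is the scalar `√(2k)` on `Σ_k`, `HBDO` therefore
acts on the chain `A₊^[j] W ∈ ℓ²(Σ_{r+j})` by a tridiagonal matrix, and `Q_K` kills exactly the
first vector `A₊^[K-r+1] W` that leaves the ball. The hypothesis on `c` says that `c` is an
eigenvector of the resulting truncated `(K-r+1) × (K-r+1)` matrix.
-/

open Finset

/-- Outer adjacency operator on vertex functions of the Boolean hypercube `B_N`:
`(A₊V)(S) = Σ_{s∈S} V(S∖{s})`. -/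
def Aplus (N : ℕ) (V : Finset (Fin N) → ℝ) : Finset (Fin N) → ℝ :=
  fun S => ∑ s ∈ S, V (S.erase s)

/-- Inner adjacency operator: `(A₋V)(R) = Σ_{b∉R} V(R∪{b})`. -/
def Aminus (N : ℕ) (V : Finset (Fin N) → ℝ) : Finset (Fin N) → ℝ :=
  fun R => ∑ b ∈ Rᶜ, V (insert b R)

/-- Adjacency operator `A = A₊ + A₋`. -/
def Adj (N : ℕ) (V : Finset (Fin N) → ℝ) : Finset (Fin N) → ℝ :=
  fun S => Aplus N V S + Aminus N V S

/-- Graph Laplacian `L = N·I − A`. -/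
def Lap (N : ℕ) (V : Finset (Fin N) → ℝ) : Finset (Fin N) → ℝ :=
  fun S => (N : ℝ) * V S - Adj N V S

/-- Inner product `⟨V,U⟩ = Σ_S V(S)U(S)` on vertex functions. -/
def inner' (N : ℕ) (V U : Finset (Fin N) → ℝ) : ℝ :=
  ∑ S : Finset (Fin N), V S * U S

/-- `V` is supported on the Hamming sphere `Σ_r` (vanishes off sets of cardinality `r`). -/
def suppOn (N r : ℕ) (V : Finset (Fin N) → ℝ) : Prop :=
  ∀ S : Finset (Fin N), S.card ≠ r → V S = 0

/-- Membership in `W_r`: supported on `Σ_r` and orthogonal to `A₊ℓ²(Σ_{r−1})`.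
(For `r = 0` the orthogonality condition is vacuous, so `W_0 = ℓ²(Σ_0)`.) -/
def memW (N r : ℕ) (W : Finset (Fin N) → ℝ) : Prop :=
  suppOn N r W ∧
    ∀ U : Finset (Fin N) → ℝ, suppOn N (r - 1) U → inner' N W (Aplus N U) = 0

/-- `m(r,k) = Σ_{j=0}^{k} (N − 2(r+j))`. -/
def mcoef (N r k : ℕ) : ℝ :=
  ∑ j ∈ Finset.range (k + 1), ((N : ℝ) - 2 * ((r : ℝ) + (j : ℝ)))

/-- Hadamard vector `H_S(R) = (−1)^{|R∩S|}`. -/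
def Had (N : ℕ) (S R : Finset (Fin N)) : ℝ := (-1 : ℝ) ^ (R ∩ S).card

/-- Spatial truncation `Q_K`: restriction to the Hamming ball of radius `K`. -/
def QK (N K : ℕ) (V : Finset (Fin N) → ℝ) : Finset (Fin N) → ℝ :=
  fun S => if S.card ≤ K then V S else 0

/-- Spectral projection `P_K`: orthogonal projection onto `span{H_S : |S| ≤ K}`,
given by `P_K V = Σ_{|S|≤K} (⟨V,H_S⟩/2^N)·H_S`. -/
noncomputable def PK (N K : ℕ) (V : Finset (Fin N) → ℝ) : Finset (Fin N) → ℝ :=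
  fun R => ∑ S ∈ Finset.univ.filter (fun S : Finset (Fin N) => S.card ≤ K),
    (inner' N V (Had N S) / 2 ^ N) * Had N S R

/-- Diagonal operator `(TV)(R) = √(2|R|)·V(R)`. -/
noncomputable def Tdiag (N : ℕ) (V : Finset (Fin N) → ℝ) : Finset (Fin N) → ℝ :=
  fun R => Real.sqrt (2 * (R.card : ℝ)) * V R

/-- Boolean difference operator conjugated by the Hadamard transform:
`HBDO = T(αI − L)T + βL`. -/
noncomputable def HBDO (N : ℕ) (α β : ℝ) (V : Finset (Fin N) → ℝ) : Finset (Fin N) → ℝ :=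
  fun R => Tdiag N (fun S => α * Tdiag N V S - Lap N (Tdiag N V) S) R + β * Lap N V R

/-- Hadamard transform `(HV)(R) = Σ_S (−1)^{|R∩S|} V(S)`. -/
def Hmat (N : ℕ) (V : Finset (Fin N) → ℝ) : Finset (Fin N) → ℝ :=
  fun R => ∑ S : Finset (Fin N), Had N S R * V S

/-- Commutator `C = A₋A₊ − A₊A₋`. -/
def Cop (N : ℕ) (V : Finset (Fin N) → ℝ) : Finset (Fin N) → ℝ :=
  fun S => Aminus N (Aplus N V) S - Aplus N (Aminus N V) S

section Tridiagonal

variable {M : Type*} [AddCommGroup M] [Module ℝ M]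

theorem LinearMap.map_sum_eq_smul_of_tridiagonal (f : M →ₗ[ℝ] M) (X : ℕ → M)
    (a b e c : ℕ → ℝ) (n : ℕ) (lam : ℝ) (he : e 0 = 0) (hX : X (n + 1) = 0)
    (hc : c (n + 1) = 0)
    (hf : ∀ j ≤ n, f (X j) = a j • X j + b j • X (j + 1) + e j • X (j - 1))
    (heig : ∀ j ≤ n,
      a j * c j + e (j + 1) * c (j + 1) + (if j = 0 then 0 else b (j - 1) * c (j - 1))
        = lam * c j) :
    f (∑ j ∈ Finset.range (n + 1), c j • X j) = lam • ∑ j ∈ Finset.range (n + 1), c j • X j := by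
  have hraise : ∑ j ∈ Finset.range (n + 1), (c j * b j) • X (j + 1)
      = ∑ j ∈ Finset.range (n + 1), (if j = 0 then 0 else b (j - 1) * c (j - 1)) • X j := by
    rw [sum_range_succ, hX, smul_zero, add_zero, sum_range_succ' _ n]
    simp [mul_comm]
  have hlower : ∑ j ∈ Finset.range (n + 1), (c j * e j) • X (j - 1)
      = ∑ j ∈ Finset.range (n + 1), (e (j + 1) * c (j + 1)) • X j := by
    rw [sum_range_succ' _ n, he, sum_range_succ _ n, hc]
    simp [mul_comm]
  calc f (∑ j ∈ Finset.range (n + 1), c j • X j)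
      = ∑ j ∈ Finset.range (n + 1), c j • (a j • X j + b j • X (j + 1) + e j • X (j - 1)) := by
        rw [map_sum]
        refine sum_congr rfl fun j hj => ?_
        rw [map_smul, hf j (Nat.lt_succ_iff.mp (Finset.mem_range.mp hj))]
    _ = ∑ j ∈ Finset.range (n + 1), (a j * c j + e (j + 1) * c (j + 1)
          + (if j = 0 then 0 else b (j - 1) * c (j - 1))) • X j := by
        simp only [smul_add, smul_smul, sum_add_distrib, hraise, hlower, add_smul]
        rw [← sum_add_distrib, ← sum_add_distrib, ← sum_add_distrib, ← sum_add_distrib]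
        refine sum_congr rfl fun j _ => ?_
        rw [mul_comm (c j)]
        abel
    _ = lam • ∑ j ∈ Finset.range (n + 1), c j • X j := by
        rw [smul_sum]
        refine sum_congr rfl fun j hj => ?_
        rw [heig j (Nat.lt_succ_iff.mp (Finset.mem_range.mp hj)), smul_smul]

end Tridiagonal

section Hypercube

variable {N : ℕ}

theorem suppOn.comp_card_mul {k : ℕ} {X : Finset (Fin N) → ℝ} (hX : suppOn N k X)
    (f : ℕ → ℝ) (S : Finset (Fin N)) : f S.card * X S = f k * X S := by
  rcases eq_or_ne S.card k with h | h
  · rw [h]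
  · rw [hX S h, mul_zero, mul_zero]

theorem suppOn.aplus {k : ℕ} {X : Finset (Fin N) → ℝ} (hX : suppOn N k X) :
    suppOn N (k + 1) (Aplus N X) := by
  intro S hS
  refine sum_eq_zero fun s hs => hX _ ?_
  have := card_pos.mpr ⟨s, hs⟩
  rw [card_erase_of_mem hs]
  omega

theorem suppOn.aminus {k : ℕ} {X : Finset (Fin N) → ℝ} (hX : suppOn N k X) :
    suppOn N (k - 1) (Aminus N X) := by
  intro R hR
  refine sum_eq_zero fun b hb => hX _ ?_
  rw [card_insert_of_notMem (mem_compl.mp hb)]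
  omega

theorem suppOn.iterate_aplus {k : ℕ} {X : Finset (Fin N) → ℝ} (hX : suppOn N k X) (j : ℕ) :
    suppOn N (k + j) ((Aplus N)^[j] X) := by
  induction j with
  | zero => exact hX
  | succ j ih => rw [Function.iterate_succ_apply']; exact ih.aplus

theorem QK_eq_self_of_suppOn {k K : ℕ} {X : Finset (Fin N) → ℝ} (hX : suppOn N k X)
    (hk : k ≤ K) : QK N K X = X := by
  funext S
  by_cases hS : S.card ≤ K
  · rw [QK, if_pos hS]
  · rw [QK, if_neg hS, hX S (by omega)]

theorem QK_eq_zero_of_suppOn {k K : ℕ} {X : Finset (Fin N) → ℝ} (hX : suppOn N k X)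
    (hk : K < k) : QK N K X = 0 := by
  funext S
  by_cases hS : S.card ≤ K
  · rw [QK, if_pos hS, hX S (by omega), Pi.zero_apply]
  · rw [QK, if_neg hS, Pi.zero_apply]

theorem inner'_aplus (V U : Finset (Fin N) → ℝ) :
    inner' N V (Aplus N U) = inner' N (Aminus N V) U := by
  simp only [inner', Aplus, Aminus, mul_sum, sum_mul]
  rw [sum_sigma' univ (fun S => S) (fun S s => V S * U (S.erase s)),
    sum_sigma' univ (fun R => Rᶜ) (fun R b => V (insert b R) * U R)]
  refine sum_nbij' (fun p => ⟨p.1.erase p.2, p.2⟩) (fun p => ⟨insert p.2 p.1, p.2⟩)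
    ?_ ?_ ?_ ?_ ?_
  · intro p _; simp
  · intro p _; simp
  · intro p hp
    simp only [mem_sigma] at hp
    exact Sigma.ext (by simp [insert_erase hp.2]) (by simp)
  · intro p hp
    simp only [mem_sigma, mem_compl] at hp
    exact Sigma.ext (by simp [erase_insert hp.2]) (by simp)
  · intro p hp
    simp only [mem_sigma] at hp
    rw [insert_erase hp.2]

theorem memW.aminus_eq_zero {r : ℕ} {W : Finset (Fin N) → ℝ} (hW : memW N r W) :
    Aminus N W = 0 := by
  have hsq : ∑ S, Aminus N W S * Aminus N W S = 0 := by
    rw [← inner', ← inner'_aplus]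
    exact hW.2 _ hW.1.aminus
  funext S
  exact mul_self_eq_zero.mp
    ((sum_eq_zero_iff_of_nonneg fun T _ => mul_self_nonneg _).mp hsq S (mem_univ S))

theorem aplus_smul (t : ℝ) (X : Finset (Fin N) → ℝ) : Aplus N (t • X) = t • Aplus N X := by
  funext S; simp [Aplus, mul_sum]

theorem lap_smul (t : ℝ) (X : Finset (Fin N) → ℝ) : Lap N (t • X) = t • Lap N X := by
  funext S; simp only [Lap, Adj, Aplus, Aminus, Pi.smul_apply, smul_eq_mul, ← mul_sum]; ring

theorem aminus_aplus_apply (X : Finset (Fin N) → ℝ) (S : Finset (Fin N)) :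
    Aminus N (Aplus N X) S = Aplus N (Aminus N X) S + ((N : ℝ) - 2 * S.card) * X S := by
  have hleft : Aminus N (Aplus N X) S = ∑ b ∈ Sᶜ, (X S + ∑ s ∈ S, X (insert b (S.erase s))) := by
    refine sum_congr rfl fun b hb => ?_
    have hbS : b ∉ S := mem_compl.mp hb
    rw [Aplus, sum_insert hbS, erase_insert hbS]
    congr 1
    exact sum_congr rfl fun s hs => by rw [erase_insert_of_ne (ne_of_mem_of_not_mem hs hbS).symm]
  have hright : Aplus N (Aminus N X) S = ∑ s ∈ S, (X S + ∑ b ∈ Sᶜ, X (insert b (S.erase s))) := by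
    refine sum_congr rfl fun s hs => ?_
    rw [Aminus, compl_erase, sum_insert (by simp [hs]), insert_erase hs]
  have hcompl : (Sᶜ.card : ℝ) = N - S.card := by
    rw [card_compl, Fintype.card_fin, Nat.cast_sub (by simpa using card_le_univ S)]
  rw [hleft, hright, sum_add_distrib, sum_add_distrib, sum_const, sum_const, sum_comm,
    nsmul_eq_mul, nsmul_eq_mul, hcompl]
  ring

theorem mcoef_succ (r j : ℕ) :
    mcoef N r (j + 1) = mcoef N r j + (N - 2 * ((r : ℝ) + (j + 1 : ℕ))) := by
  rw [mcoef, sum_range_succ, ← mcoef]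

theorem aminus_iterate_aplus_succ {r : ℕ} {W : Finset (Fin N) → ℝ} (hW : memW N r W) (j : ℕ) :
    Aminus N ((Aplus N)^[j + 1] W) = mcoef N r j • (Aplus N)^[j] W := by
  induction j with
  | zero =>
    funext S
    rw [Function.iterate_one, aminus_aplus_apply, hW.aminus_eq_zero,
      hW.1.comp_card_mul (fun k => (N : ℝ) - 2 * k)]
    simp [Aplus, mcoef]
  | succ j ih =>
    funext S
    rw [Function.iterate_succ_apply' _ (j + 1), aminus_aplus_apply, ih, aplus_smul,
      ← Function.iterate_succ_apply' (Aplus N),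
      (hW.1.iterate_aplus (j + 1)).comp_card_mul (fun k => (N : ℝ) - 2 * k), mcoef_succ]
    simp only [Pi.smul_apply, smul_eq_mul]
    push_cast
    ring

theorem sqrt_two_mul_mul_sqrt_two_mul {u : ℝ} (hu : 0 ≤ u) (v : ℝ) :
    √(2 * u) * √(2 * v) = 2 * √(u * v) := by
  rw [← Real.sqrt_mul (by positivity), show 2 * u * (2 * v) = 2 ^ 2 * (u * v) by ring,
    Real.sqrt_mul (by positivity), Real.sqrt_sq zero_le_two]

theorem hbdo_of_suppOn {k : ℕ} {X : Finset (Fin N) → ℝ} (hX : suppOn N k X) (α β : ℝ) :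
    HBDO N α β X = (2 * k * (α - N) + β * N) • X
      + (2 * √(k * (k + 1)) - β) • Aplus N X + (2 * √(k * (k - 1)) - β) • Aminus N X := by
  have hT : Tdiag N X = √(2 * k) • X := funext (hX.comp_card_mul fun m => √(2 * m))
  funext S
  simp only [HBDO, hT, lap_smul]
  simp only [Tdiag, Lap, Adj, Pi.add_apply, Pi.smul_apply, smul_eq_mul]
  have h0 := hX.comp_card_mul (fun m => √(2 * m)) S
  have h1 := hX.aplus.comp_card_mul (fun m => √(2 * m)) S
  have h2 := hX.aminus.comp_card_mul (fun m => √(2 * m)) S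
  have p0 : √(2 * k) * √(2 * k) = 2 * k := Real.mul_self_sqrt (by positivity)
  have p1 : √(2 * k) * √(2 * ((k + 1 : ℕ) : ℝ)) = 2 * √(k * (k + 1)) := by
    rw [sqrt_two_mul_mul_sqrt_two_mul (Nat.cast_nonneg k)]; push_cast; rfl
  have p2 : √(2 * k) * √(2 * ((k - 1 : ℕ) : ℝ)) = 2 * √(k * (k - 1)) := by
    rcases Nat.eq_zero_or_pos k with rfl | hk
    · simp
    · rw [sqrt_two_mul_mul_sqrt_two_mul (Nat.cast_nonneg k), Nat.cast_sub hk, Nat.cast_one]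
  linear_combination (α - N) * √(2 * k) * h0 + √(2 * k) * h1 + √(2 * k) * h2
    + (α - N) * X S * p0 + Aplus N X S * p1 + Aminus N X S * p2

theorem hbdo_iterate_aplus {r : ℕ} {W : Finset (Fin N) → ℝ} (hW : memW N r W) (α β : ℝ)
    (j : ℕ) :
    HBDO N α β ((Aplus N)^[j] W)
      = (2 * ((r : ℝ) + j) * (α - N) + β * N) • (Aplus N)^[j] W
        + (2 * √(((r : ℝ) + j) * ((r : ℝ) + j + 1)) - β) • (Aplus N)^[j + 1] W
        + ((2 * √(((r : ℝ) + j) * ((r : ℝ) + j - 1)) - β)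
            * if j = 0 then 0 else mcoef N r (j - 1)) • (Aplus N)^[j - 1] W := by
  have hlower : Aminus N ((Aplus N)^[j] W)
      = (if j = 0 then 0 else mcoef N r (j - 1)) • (Aplus N)^[j - 1] W := by
    rcases j with _ | j
    · simpa using hW.aminus_eq_zero
    · simpa using aminus_iterate_aplus_succ hW j
  rw [hbdo_of_suppOn (hW.1.iterate_aplus j), hlower, ← Function.iterate_succ_apply' (Aplus N),
    smul_smul]
  push_cast
  rfl

end Hypercube

def QKₗ (N K : ℕ) : (Finset (Fin N) → ℝ) →ₗ[ℝ] (Finset (Fin N) → ℝ) where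
  toFun := QK N K
  map_add' V U := by funext S; simp only [QK, Pi.add_apply]; split_ifs <;> simp
  map_smul' t V := by funext S; simp only [QK, Pi.smul_apply, smul_eq_mul]; split_ifs <;> simp

noncomputable def HBDOₗ (N : ℕ) (α β : ℝ) : (Finset (Fin N) → ℝ) →ₗ[ℝ] (Finset (Fin N) → ℝ) where
  toFun := HBDO N α β
  map_add' V U := by
    funext S
    simp only [HBDO, Tdiag, Lap, Adj, Aplus, Aminus, Pi.add_apply, mul_add, sum_add_distrib]
    ring
  map_smul' t V := by
    funext S
    simp only [HBDO, Tdiag, Lap, Adj, Aplus, Aminus, Pi.smul_apply, smul_eq_mul,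
      RingHom.id_apply, mul_left_comm _ t, ← mul_sum]
    ring

theorem truncated_hbdo_eigenvector_general (N : ℕ) (α β : ℝ) (r K : ℕ)
    (hrK : r ≤ K) (lam : ℝ)
    (c : ℕ → ℝ) (hc : ∀ j, K - r < j → c j = 0)
    (heig : ∀ j ≤ K - r,
      (2 * ((r : ℝ) + (j : ℝ)) * (α - (N : ℝ)) + β * (N : ℝ)) * c j
        + (2 * Real.sqrt (((r : ℝ) + (j : ℝ)) * ((r : ℝ) + (j : ℝ) + 1)) - β)
            * mcoef N r j * c (j + 1)
        + (2 * Real.sqrt (((r : ℝ) + (j : ℝ)) * ((r : ℝ) + (j : ℝ) - 1)) - β)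
            * (if j = 0 then 0 else c (j - 1))
      = lam * c j)
    (W : Finset (Fin N) → ℝ) (hW : memW N r W) :
    QK N K (HBDO N α β (QK N K (∑ j ∈ Finset.range (K - r + 1), c j • (Aplus N)^[j] W)))
      = lam • ∑ j ∈ Finset.range (K - r + 1), c j • (Aplus N)^[j] W := by
  set n := K - r
  set X : ℕ → Finset (Fin N) → ℝ := fun j => QK N K ((Aplus N)^[j] W)
  have hX : ∀ j ≤ n, X j = (Aplus N)^[j] W :=
    fun j hj => QK_eq_self_of_suppOn (hW.1.iterate_aplus j) (by omega)
  have hXn : X (n + 1) = 0 := QK_eq_zero_of_suppOn (hW.1.iterate_aplus (n + 1)) (by omega)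
  rw [← sum_congr rfl fun j hj => congrArg (c j • ·) (hX j (by simpa [Nat.lt_succ_iff] using hj))]
  refine (QKₗ N K ∘ₗ HBDOₗ N α β ∘ₗ QKₗ N K).map_sum_eq_smul_of_tridiagonal X
    (fun j => 2 * ((r : ℝ) + j) * (α - N) + β * N)
    (fun j => 2 * √(((r : ℝ) + j) * ((r : ℝ) + j + 1)) - β)
    (fun j => (2 * √(((r : ℝ) + j) * ((r : ℝ) + j - 1)) - β)
      * if j = 0 then 0 else mcoef N r (j - 1))
    c n lam (by simp) hXn (hc _ (by omega)) (fun j hj => ?_) (fun j hj => ?_)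
  · change QKₗ N K (HBDO N α β (QK N K (X j))) = _
    rw [show QK N K (X j) = (Aplus N)^[j] W by rw [hX j hj]; exact hX j hj,
      hbdo_iterate_aplus hW, map_add, map_add, map_smul, map_smul, map_smul]
    rfl
  · have hraise : ((r : ℝ) + (j + 1 : ℕ)) * ((r : ℝ) + (j + 1 : ℕ) - 1)
        = ((r : ℝ) + j) * ((r : ℝ) + j + 1) := by push_cast; ring
    simp only [hraise, Nat.add_sub_cancel, Nat.add_one_ne_zero, if_false]
    rcases j with _ | i
    · simpa using heig 0 hj
    · have hlower : ((r : ℝ) + i) * ((r : ℝ) + i + 1)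
          = ((r : ℝ) + (i + 1 : ℕ)) * ((r : ℝ) + (i + 1 : ℕ) - 1) := by push_cast; ring
      have h := heig (i + 1) hj
      simp only [hlower, Nat.add_sub_cancel, Nat.add_one_ne_zero, if_false] at h ⊢
      linear_combination h

/-- if `(c_0,…,c_{K−r})` satisfies the truncated tridiagonal eigenvector
equations (conventions `c_{−1} = 0`, `c_{K−r+1} = 0`), then for every `W ∈ W_r` the
vertex function `V = Σ_{j=0}^{K−r} c_j·A₊^{j}W` satisfies `Q_K(HBDO(Q_K V)) = λV`. -/
theorem truncated_hbdo_eigenvector (N : ℕ) (hN : 1 ≤ N) (α β : ℝ) (r K : ℕ)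
    (hrK : r ≤ K) (hK : K < N) (lam : ℝ)
    (c : ℕ → ℝ) (hc : ∀ j, K - r < j → c j = 0)
    (heig : ∀ j ≤ K - r,
      (2 * ((r : ℝ) + (j : ℝ)) * (α - (N : ℝ)) + β * (N : ℝ)) * c j
        + (2 * Real.sqrt (((r : ℝ) + (j : ℝ)) * ((r : ℝ) + (j : ℝ) + 1)) - β)
            * mcoef N r j * c (j + 1)
        + (2 * Real.sqrt (((r : ℝ) + (j : ℝ)) * ((r : ℝ) + (j : ℝ) - 1)) - β)
            * (if j = 0 then 0 else c (j - 1))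
      = lam * c j)
    (W : Finset (Fin N) → ℝ) (hW : memW N r W) :
    QK N K (HBDO N α β (QK N K (∑ j ∈ Finset.range (K - r + 1), c j • (Aplus N)^[j] W)))
      = lam • ∑ j ∈ Finset.range (K - r + 1), c j • (Aplus N)^[j] W :=
  truncated_hbdo_eigenvector_general N α β r K hrK lam c hc heig W hW
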